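/- Let d and d' be Dyck paths on an n×n board such that the associated natural unit interval orders are dual under reversal: for all i, j ∈ {1,…,n}, i ≺ j in P(d') if and only if n+1−j ≺ n+1−i in P(d) (equivalently, the Young diagram of cells above d' is the transpose of the Young diagram of cells above d). Let G = inc(P(d)) and G' = inc(P(d')). Then the chromatic quasisymmetric functions coincide: for every N ≥ n, X_G(x_1,…,x_N;q) = X_{G'}(x_1,…,x_N;q). -/

import Mathlib

open scoped Classical

/-- A Dyck path on an `n × n` board: a weakly increasing sequence
`d 1 ≤ d 2 ≤ ⋯ ≤ d (n-1) ≤ n` with `i ≤ d i`; we record it on indices `1, …, n`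
with the harmless boundary convention `d n = n`. -/
structure DyckPath (n : ℕ) where
  d : ℕ → ℕ
  mono : ∀ i j : ℕ, 1 ≤ i → i ≤ j → j ≤ n → d i ≤ d j
  le_n : ∀ i : ℕ, 1 ≤ i → i ≤ n → d i ≤ n
  ge_self : ∀ i : ℕ, 1 ≤ i → i ≤ n → i ≤ d i
  top : d n = n

namespace DyckPath

variable {n : ℕ}

/-- The natural unit interval order `P(d)`: `i ≺ j ↔ i < n ∧ j > d i`. -/
def prec (D : DyckPath n) (i j : ℕ) : Prop := i < n ∧ D.d i < j

/-- Incomparability in `P(d)`; distinct incomparable vertices are the edges of `inc(P)`. -/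
def Incomp (D : DyckPath n) (x y : ℕ) : Prop := ¬ D.prec x y ∧ ¬ D.prec y x

/-- The bounce sequence `m 0 = d 1`, `m (k+1) = d (m k + 1)`. -/
def bounce (D : DyckPath n) : ℕ → ℕ
  | 0 => D.d 1
  | k + 1 => D.d (D.bounce k + 1)

def m0 (D : DyckPath n) : ℕ := D.bounce 0

def m1 (D : DyckPath n) : ℕ := D.bounce 1

/-- `d` has bounce number three: `m 2 = n` is the first bounce term equal to `n`. -/
def BounceThree (D : DyckPath n) : Prop := D.m0 < n ∧ D.m1 < n ∧ D.bounce 2 = n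

/-- A proper coloring of `inc(P(d))` with colors in `Fin N`
(vertex `v : Fin n` stands for `v + 1 ∈ {1, …, n}`). -/
def IsProperColoring (D : DyckPath n) {N : ℕ} (κ : Fin n → Fin N) : Prop :=
  ∀ u v : Fin n, D.Incomp (u.1 + 1) (v.1 + 1) → u ≠ v → κ u ≠ κ v

/-- The number of ascents of a coloring: edges `{i, j}` of `inc(P(d))` with `i < j`
and `κ i < κ j`. -/
noncomputable def ascNum (D : DyckPath n) {N : ℕ} (κ : Fin n → Fin N) : ℕ :=
  (Finset.univ.filter fun p : Fin n × Fin n =>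
    p.1 < p.2 ∧ D.Incomp (p.1.1 + 1) (p.2.1 + 1) ∧ κ p.1 < κ p.2).card

/-- The chromatic quasisymmetric polynomial `X_{inc(P(d))}(x₁, …, x_N; q)`, as a
multivariate polynomial in `x₁, …, x_N` with coefficients in `ℤ[q]`. -/
noncomputable def Xq (D : DyckPath n) (N : ℕ) : MvPolynomial (Fin N) (Polynomial ℤ) :=
  ∑ κ ∈ (Finset.univ : Finset (Fin n → Fin N)).filter (fun κ => D.IsProperColoring κ),
    MvPolynomial.C ((Polynomial.X : Polynomial ℤ) ^ D.ascNum κ) *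
      ∏ v : Fin n, MvPolynomial.X (κ v)

end DyckPath

namespace SWaux

open DyckPath Finset

variable {n N : ℕ}

/-- The edge relation of `inc(P(d))` on ordered pairs of `Fin n` vertices. -/
def EAdj (D : DyckPath n) (u v : Fin n) : Prop := u.1 < v.1 ∧ v.1 + 1 ≤ D.d (u.1 + 1)

lemma incomp_iff (D : DyckPath n) {u v : Fin n} (h : u.1 < v.1) :
    D.Incomp (u.1 + 1) (v.1 + 1) ↔ v.1 + 1 ≤ D.d (u.1 + 1) := by
  have hv : v.1 < n := v.isLt
  have hg := D.ge_self (v.1 + 1) (by omega) (by omega)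
  constructor
  · rintro ⟨h1, -⟩
    by_contra hlt
    exact h1 ⟨by omega, by omega⟩
  · intro hle
    constructor
    · rintro ⟨-, h2⟩; omega
    · rintro ⟨-, h2⟩; omega

lemma incomp_symm (D : DyckPath n) {x y : ℕ} (h : D.Incomp x y) : D.Incomp y x := ⟨h.2, h.1⟩

lemma EAdj.incomp {D : DyckPath n} {u v : Fin n} (h : EAdj D u v) :
    D.Incomp (u.1 + 1) (v.1 + 1) := (incomp_iff D h.1).2 h.2

lemma EAdj.ne {D : DyckPath n} {u v : Fin n} (h : EAdj D u v) : u ≠ v := by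
  intro hh; rw [hh] at h; exact lt_irrefl _ h.1

lemma eadj_of_incomp {D : DyckPath n} {u v : Fin n} (h : u.1 < v.1)
    (hI : D.Incomp (u.1 + 1) (v.1 + 1)) : EAdj D u v := ⟨h, (incomp_iff D h).1 hI⟩

/-- interval property -/
lemma EAdj.left {D : DyckPath n} {u z v : Fin n} (h : EAdj D u v)
    (h1 : u.1 < z.1) (h2 : z.1 < v.1) : EAdj D u z := ⟨h1, by have := h.2; omega⟩

lemma EAdj.right {D : DyckPath n} {u z v : Fin n} (h : EAdj D u v)
    (h1 : u.1 < z.1) (h2 : z.1 < v.1) : EAdj D z v := by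
  refine ⟨h2, le_trans h.2 ?_⟩
  exact D.mono (u.1 + 1) (z.1 + 1) (by omega) (by omega) (by have := z.isLt; omega)

lemma proper_ne {D : DyckPath n} {κ : Fin n → Fin N} (hκ : D.IsProperColoring κ)
    {u v : Fin n} (h : EAdj D u v) : κ u ≠ κ v :=
  hκ u v h.incomp h.ne

section Runs

variable (D : DyckPath n) (S : Finset (Fin n))

/-- `u` and `v` are consecutive elements of `S`. -/
def Consec (u v : Fin n) : Prop :=
  u ∈ S ∧ v ∈ S ∧ u < v ∧ ∀ z ∈ S, ¬(u < z ∧ z < v)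

/-- All consecutive pairs of `S` between `a` and `b` are edges. -/
def Link (a b : Fin n) : Prop :=
  a ∈ S ∧ b ∈ S ∧ a ≤ b ∧ ∀ x y : Fin n, Consec S x y → a ≤ x → y ≤ b → EAdj D x y

def rel (a b : Fin n) : Prop := Link D S (min a b) (max a b)

/-- The run (connected component of the induced graph) containing `v`. -/
noncomputable def run (v : Fin n) : Finset (Fin n) := S.filter (rel D S v)

variable {D S}

lemma link_refl {a : Fin n} (ha : a ∈ S) : Link D S a a := by
  refine ⟨ha, ha, le_refl _, fun x y hc hx hy => absurd (lt_of_lt_of_le hc.2.2.1 hy) ?_⟩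
  exact not_lt.2 hx

lemma Link.restrict {a b e : Fin n} (h : Link D S a e) (hb : b ∈ S)
    (h1 : a ≤ b) (h2 : b ≤ e) : Link D S a b ∧ Link D S b e := by
  obtain ⟨ha, he, -, hall⟩ := h
  exact ⟨⟨ha, hb, h1, fun x y hc hx hy => hall x y hc hx (le_trans hy h2)⟩,
    ⟨hb, he, h2, fun x y hc hx hy => hall x y hc (le_trans h1 hx) hy⟩⟩

lemma Link.glue {a b e : Fin n} (h1 : Link D S a b) (h2 : Link D S b e) : Link D S a e := by
  obtain ⟨ha, hb, hab, hall1⟩ := h1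
  obtain ⟨-, he, hbe, hall2⟩ := h2
  refine ⟨ha, he, le_trans hab hbe, fun x y hc hx hy => ?_⟩
  rcases le_or_gt y b with h | h
  · exact hall1 x y hc hx h
  rcases le_or_gt b x with h' | h'
  · exact hall2 x y hc h' hy
  exact absurd ⟨h', h⟩ (hc.2.2.2 b hb)

lemma rel_refl {a : Fin n} (ha : a ∈ S) : rel D S a a := by
  simpa [rel] using link_refl ha

lemma rel_symm {a b : Fin n} (h : rel D S a b) : rel D S b a := by
  simpa [rel, min_comm, max_comm] using h

lemma rel.mem_left {a b : Fin n} (h : rel D S a b) : a ∈ S := by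
  rcases le_total a b with hab | hab
  · simpa [rel, min_eq_left hab] using h.1
  · simpa [rel, max_eq_left hab] using h.2.1

lemma rel.mem_right {a b : Fin n} (h : rel D S a b) : b ∈ S := rel_symm h |>.mem_left

lemma rel_of_link {a b : Fin n} (h : Link D S a b) : rel D S a b := by
  have := h.2.2.1
  simpa [rel, min_eq_left this, max_eq_right this] using h

lemma rel.link {a b : Fin n} (h : rel D S a b) (hab : a ≤ b) : Link D S a b := by
  simpa [rel, min_eq_left hab, max_eq_right hab] using h

lemma rel_trans {a b e : Fin n} (h1 : rel D S a b) (h2 : rel D S b e) : rel D S a e := by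
  have ha := h1.mem_left
  have hb := h1.mem_right
  have he := h2.mem_right
  rcases le_total a b with hab | hab <;> rcases le_total b e with hbe | hbe <;>
    rcases le_total a e with hae | hae
  · exact rel_of_link ((h1.link hab).glue (h2.link hbe))
  · have : a = e := le_antisymm (le_trans hab hbe) hae
    exact this ▸ rel_refl ha
  · exact rel_of_link ((h1.link hab).restrict he hae hbe).1
  · exact rel_symm (rel_of_link (((rel_symm h2).link hbe).restrict ha hae hab).1)
  · exact rel_of_link ((h2.link hbe).restrict ha hab hae).2
  · exact rel_symm (rel_of_link (((rel_symm h1).link hab).restrict he hbe hae).2)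
  · have : a = e := le_antisymm hae (le_trans hbe hab)
    exact this ▸ rel_refl ha
  · exact rel_symm (rel_of_link (((rel_symm h2).link hbe).glue ((rel_symm h1).link hab)))

end Runs

end SWaux

namespace SWaux

open DyckPath Finset

variable {n N : ℕ} {D : DyckPath n} {S : Finset (Fin n)}

lemma mem_run {v w : Fin n} : w ∈ run D S v ↔ w ∈ S ∧ rel D S v w := by
  simp [run]

lemma self_mem_run {v : Fin n} (hv : v ∈ S) : v ∈ run D S v :=
  mem_run.2 ⟨hv, rel_refl hv⟩

lemma run_subset {v : Fin n} : run D S v ⊆ S := filter_subset _ _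

lemma run_eq_of_mem {v w : Fin n} (h : w ∈ run D S v) : run D S w = run D S v := by
  obtain ⟨hwS, hrel⟩ := mem_run.1 h
  ext z
  simp only [mem_run]
  exact ⟨fun ⟨hz, hr⟩ => ⟨hz, rel_trans hrel hr⟩,
    fun ⟨hz, hr⟩ => ⟨hz, rel_trans (rel_symm hrel) hr⟩⟩

lemma rel_of_mem_run {v a b : Fin n} (ha : a ∈ run D S v) (hb : b ∈ run D S v) :
    rel D S a b :=
  rel_trans (rel_symm (mem_run.1 ha).2) (mem_run.1 hb).2

lemma between_mem_run {v a b z : Fin n} (ha : a ∈ run D S v) (hb : b ∈ run D S v)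
    (hz : z ∈ S) (h1 : a < z) (h2 : z < b) : z ∈ run D S v := by
  have hrel := rel_of_mem_run ha hb
  have hlink := hrel.link (le_of_lt (lt_trans h1 h2))
  have := (hlink.restrict hz (le_of_lt h1) (le_of_lt h2)).1
  exact mem_run.2 ⟨hz, rel_trans (mem_run.1 ha).2 (rel_of_link this)⟩

/-- an edge inside `S` joins consecutive elements of `S` (triangle argument). -/
lemma consec_of_edge {κ : Fin n → Fin N} {c c1 : Fin N}
    (hκ : D.IsProperColoring κ) {a b : Fin n}
    (hS : S = Finset.univ.filter (fun v => κ v = c ∨ κ v = c1))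
    (ha : a ∈ S) (hb : b ∈ S) (he : EAdj D a b) : Consec S a b := by
  refine ⟨ha, hb, by exact_mod_cast he.1, fun z hz ⟨h1, h2⟩ => ?_⟩
  have h1' : a.1 < z.1 := h1
  have h2' : z.1 < b.1 := h2
  have e1 : EAdj D a z := he.left h1' h2'
  have e2 : EAdj D z b := he.right h1' h2'
  have k1 := proper_ne hκ e1
  have k2 := proper_ne hκ e2
  have k3 := proper_ne hκ he
  subst hS
  simp only [mem_filter, mem_univ, true_and] at ha hb hz
  rcases ha with ha | ha <;> rcases hb with hb | hb <;> rcases hz with hz | hz <;>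
    simp_all

/-- an edge inside `S` links its endpoints. -/
lemma rel_of_edge {κ : Fin n → Fin N} {c c1 : Fin N}
    (hκ : D.IsProperColoring κ) {a b : Fin n}
    (hS : S = Finset.univ.filter (fun v => κ v = c ∨ κ v = c1))
    (ha : a ∈ S) (hb : b ∈ S) (he : EAdj D a b) : rel D S a b := by
  have hc := consec_of_edge hκ hS ha hb he
  refine rel_of_link ⟨ha, hb, le_of_lt hc.2.2.1, fun x y hcxy hx hy => ?_⟩
  have hxy := hcxy.2.2.1
  have hx' : x = a := by
    by_contra hne
    have : a < x := lt_of_le_of_ne hx (Ne.symm hne)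
    exact hc.2.2.2 x hcxy.1 ⟨this, lt_of_lt_of_le hxy hy⟩
  have hy' : y = b := by
    by_contra hne
    have : y < b := lt_of_le_of_ne hy hne
    exact hc.2.2.2 y hcxy.2.1 ⟨lt_of_le_of_lt (le_of_eq hx'.symm) hxy, this⟩
  rw [hx', hy']
  exact he

section Mirror

variable (R : Finset (Fin n))

/-- index of `w` in the sorted list of `R` -/
noncomputable def idx (w : Fin n) : ℕ := (R.sort (· ≤ ·)).idxOf w

/-- the order-reversing mirror map of `R` -/
noncomputable def mir (w : Fin n) : Fin n :=
  (R.sort (· ≤ ·)).getD (R.card - 1 - idx R w) w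

variable {R}

lemma idx_lt {w : Fin n} (hw : w ∈ R) : idx R w < R.card := by
  rw [← Finset.length_sort (α := Fin n) (· ≤ ·)]
  exact List.idxOf_lt_length_iff.2 ((Finset.mem_sort _).2 hw)

lemma getElem_idx {w : Fin n} (hw : w ∈ R) :
    (R.sort (· ≤ ·))[idx R w]'(by simpa using idx_lt hw) = w :=
  List.getElem_idxOf (by simpa [idx] using idx_lt hw)

lemma idx_getElem {i : ℕ} (h : i < (R.sort (· ≤ ·)).length) :
    idx R ((R.sort (· ≤ ·))[i]) = i :=
  List.Nodup.idxOf_getElem (R.sort_nodup _) i h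

lemma getElem_mem_sort {i : ℕ} (h : i < (R.sort (· ≤ ·)).length) :
    (R.sort (· ≤ ·))[i] ∈ R :=
  (Finset.mem_sort _).1 (List.getElem_mem h)

lemma getElem_lt_getElem {i j : ℕ} (hi : i < (R.sort (· ≤ ·)).length)
    (hj : j < (R.sort (· ≤ ·)).length) (hij : i < j) :
    (R.sort (· ≤ ·))[i] < (R.sort (· ≤ ·))[j] := by
  have hs := Finset.sortedLT_sort R
  exact List.SortedLT.strictMono_get hs (show (⟨i, hi⟩ : Fin _) < ⟨j, hj⟩ from hij)

lemma idx_inj {u w : Fin n} (hu : u ∈ R) (hw : w ∈ R) (h : idx R u = idx R w) :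
    u = w := by
  have h1 := getElem_idx hu
  have h2 := getElem_idx hw
  rw [← h1, ← h2]
  congr 1

lemma lt_iff_idx_lt {u w : Fin n} (hu : u ∈ R) (hw : w ∈ R) :
    u < w ↔ idx R u < idx R w := by
  constructor
  · intro h
    rcases lt_trichotomy (idx R u) (idx R w) with hh | hh | hh
    · exact hh
    · exact absurd (idx_inj hu hw hh ▸ h) (lt_irrefl _)
    · have := getElem_lt_getElem (by simpa using idx_lt hw) (by simpa using idx_lt hu) hh
      rw [getElem_idx hu, getElem_idx hw] at this
      exact absurd (lt_trans h this) (lt_irrefl _)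
  · intro h
    have := getElem_lt_getElem (by simpa using idx_lt hu) (by simpa using idx_lt hw) h
    rwa [getElem_idx hu, getElem_idx hw] at this

lemma idx_lt_idx {u w : Fin n} (hu : u ∈ R) (hw : w ∈ R) (h : u < w) :
    idx R u < idx R w := (lt_iff_idx_lt hu hw).1 h

lemma mir_eq_getElem {w : Fin n} (hw : w ∈ R) :
    mir R w = (R.sort (· ≤ ·))[R.card - 1 - idx R w]'(by
      have := idx_lt hw; simp; omega) := by
  rw [mir, List.getD_eq_getElem]

lemma mir_mem {w : Fin n} (hw : w ∈ R) : mir R w ∈ R := by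
  rw [mir_eq_getElem hw]
  exact getElem_mem_sort _

lemma idx_mir {w : Fin n} (hw : w ∈ R) : idx R (mir R w) = R.card - 1 - idx R w := by
  rw [mir_eq_getElem hw]
  exact idx_getElem _

lemma mir_mir {w : Fin n} (hw : w ∈ R) : mir R (mir R w) = w := by
  have h1 := idx_lt hw
  refine idx_inj (mir_mem (mir_mem hw)) hw ?_
  rw [idx_mir (mir_mem hw), idx_mir hw]
  omega

lemma mir_lt_mir {u w : Fin n} (hu : u ∈ R) (hw : w ∈ R) (h : u < w) :
    mir R w < mir R u := by
  have h1 := idx_lt hu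
  have h2 := idx_lt hw
  have h3 := idx_lt_idx hu hw h
  rw [lt_iff_idx_lt (mir_mem hw) (mir_mem hu), idx_mir hu, idx_mir hw]
  omega

end Mirror

end SWaux

namespace SWaux

open DyckPath Finset

variable {n N : ℕ} {D : DyckPath n} {S : Finset (Fin n)}

/-- consecutive (by index) elements of a run are consecutive in `S` and adjacent. -/
lemma run_consec {v₀ a b : Fin n} (ha : a ∈ run D S v₀) (hb : b ∈ run D S v₀)
    (hab : idx (run D S v₀) b = idx (run D S v₀) a + 1) :
    a < b ∧ Consec S a b ∧ EAdj D a b := by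
  set R := run D S v₀ with hR
  have haltb : a < b := by
    rw [lt_iff_idx_lt ha hb, hab]; omega
  have hnoR : ∀ z ∈ R, ¬(a < z ∧ z < b) := by
    rintro z hz ⟨h1, h2⟩
    have i1 := idx_lt_idx ha hz h1
    have i2 := idx_lt_idx hz hb h2
    omega
  have hnoS : ∀ z ∈ S, ¬(a < z ∧ z < b) := by
    rintro z hz ⟨h1, h2⟩
    exact hnoR z (between_mem_run ha hb hz h1 h2) ⟨h1, h2⟩
  have hcons : Consec S a b := ⟨run_subset ha, run_subset hb, haltb, hnoS⟩
  have hrel := rel_of_mem_run ha hb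
  exact ⟨haltb, hcons, (hrel.link (le_of_lt haltb)).2.2.2 a b hcons (le_refl _) (le_refl _)⟩

/-- an edge of the graph inside `S` joins index-consecutive elements of a common run. -/
lemma edge_idx_succ {κ : Fin n → Fin N} {c c1 : Fin N}
    (hκ : D.IsProperColoring κ)
    (hS : S = Finset.univ.filter (fun v => κ v = c ∨ κ v = c1))
    {a b : Fin n} (ha : a ∈ S) (hb : b ∈ S) (he : EAdj D a b) :
    b ∈ run D S a ∧ idx (run D S a) b = idx (run D S a) a + 1 := by
  have hrel := rel_of_edge hκ hS ha hb he
  have hcons := consec_of_edge hκ hS ha hb he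
  have hbR : b ∈ run D S a := mem_run.2 ⟨hb, hrel⟩
  have haR : a ∈ run D S a := self_mem_run ha
  have haltb : a < b := hcons.2.2.1
  have hi := idx_lt_idx haR hbR haltb
  rcases Nat.lt_or_ge (idx (run D S a) a + 1) (idx (run D S a) b) with hlt | hge
  · exfalso
    have hmid : idx (run D S a) a + 1 < (Finset.sort (run D S a) (· ≤ ·)).length := by
      have := idx_lt hbR; simp only [Finset.length_sort]; omega
    set z := (Finset.sort (run D S a) (· ≤ ·))[idx (run D S a) a + 1] with hz
    have hzR : z ∈ run D S a := getElem_mem_sort hmid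
    have hiz : idx (run D S a) z = idx (run D S a) a + 1 := idx_getElem hmid
    have h1 : a < z := by rw [lt_iff_idx_lt haR hzR, hiz]; omega
    have h2 : z < b := by rw [lt_iff_idx_lt hzR hbR, hiz]; omega
    exact hcons.2.2.2 z (run_subset hzR) ⟨h1, h2⟩
  · exact ⟨hbR, by omega⟩

lemma swap_iter (c c1 : Fin N) (k : ℕ) (x : Fin N) :
    (Equiv.swap c c1)^[k] x = if Even k then x else Equiv.swap c c1 x := by
  induction k with
  | zero => simp
  | succ k ih =>
    rw [Function.iterate_succ_apply', ih]
    by_cases h : Even k <;> simp [h, Nat.even_add_one, Equiv.swap_apply_self]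

section Colors

variable {κ : Fin n → Fin N} {c c1 : Fin N} {v₀ : Fin n}

/-- colors along a run alternate. -/
lemma color_getElem (hκ : D.IsProperColoring κ) (hne : c ≠ c1)
    (hS : S = Finset.univ.filter (fun v => κ v = c ∨ κ v = c1))
    (i : ℕ) (h : i < (Finset.sort (run D S v₀) (· ≤ ·)).length)
    (h0 : 0 < (Finset.sort (run D S v₀) (· ≤ ·)).length) :
    κ ((Finset.sort (run D S v₀) (· ≤ ·))[i]) =
      (Equiv.swap c c1)^[i] (κ ((Finset.sort (run D S v₀) (· ≤ ·))[0])) := by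
  induction i with
  | zero => simp
  | succ i ih =>
    have hi : i < (Finset.sort (run D S v₀) (· ≤ ·)).length := by omega
    set R := run D S v₀ with hR
    set a := (Finset.sort R (· ≤ ·))[i] with hadef
    set b := (Finset.sort R (· ≤ ·))[i+1] with hbdef
    have haR : a ∈ R := getElem_mem_sort hi
    have hbR : b ∈ R := getElem_mem_sort h
    have hia : idx R a = i := idx_getElem hi
    have hib : idx R b = i + 1 := idx_getElem h
    obtain ⟨-, -, he⟩ := run_consec haR hbR (by rw [hia, hib])
    have hneq : κ a ≠ κ b := proper_ne hκ he
    have haS : κ a = c ∨ κ a = c1 := by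
      have := run_subset haR; rw [hS] at this; simpa using this
    have hbS : κ b = c ∨ κ b = c1 := by
      have := run_subset hbR; rw [hS] at this; simpa using this
    have hstep : κ b = Equiv.swap c c1 (κ a) := by
      rcases haS with h1 | h1 <;> rcases hbS with h2 | h2 <;>
        simp_all [Equiv.swap_apply_left, Equiv.swap_apply_right]
    rw [Function.iterate_succ_apply', ← ih hi, hstep]

/-- in a run of odd size, mirror-symmetric vertices have the same color. -/
lemma color_mir_odd (hκ : D.IsProperColoring κ) (hne : c ≠ c1)
    (hS : S = Finset.univ.filter (fun v => κ v = c ∨ κ v = c1))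
    (hodd : Odd (run D S v₀).card) {w : Fin n} (hw : w ∈ run D S v₀) :
    κ (mir (run D S v₀) w) = κ w := by
  set R := run D S v₀ with hR
  have hiw := idx_lt hw
  have h0 : 0 < (Finset.sort R (· ≤ ·)).length := by simp only [Finset.length_sort]; omega
  have hmm := mir_mem hw
  have e1 : κ (mir R w) = (Equiv.swap c c1)^[idx R (mir R w)]
      (κ ((Finset.sort R (· ≤ ·))[0])) := by
    have h' := color_getElem (v₀ := v₀) hκ hne hS (idx R (mir R w))
      (by simpa using idx_lt hmm) h0
    rwa [getElem_idx hmm] at h'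
  have e2 : κ w = (Equiv.swap c c1)^[idx R w] (κ ((Finset.sort R (· ≤ ·))[0])) := by
    have h' := color_getElem (v₀ := v₀) hκ hne hS (idx R w)
      (by simpa using idx_lt hw) h0
    rwa [getElem_idx hw] at h'
  rw [e1, e2, idx_mir hw, swap_iter, swap_iter]
  have hpar : (R.card - 1 - idx R w) % 2 = idx R w % 2 := by
    rcases hodd with ⟨t, ht⟩; omega
  simp only [Nat.even_iff, hpar]

/-- in a run of even size, mirror-symmetric vertices have swapped colors. -/
lemma color_mir_even (hκ : D.IsProperColoring κ) (hne : c ≠ c1)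
    (hS : S = Finset.univ.filter (fun v => κ v = c ∨ κ v = c1))
    (heven : Even (run D S v₀).card) {w : Fin n} (hw : w ∈ run D S v₀) :
    κ (mir (run D S v₀) w) = Equiv.swap c c1 (κ w) := by
  set R := run D S v₀ with hR
  have hiw := idx_lt hw
  have h0 : 0 < (Finset.sort R (· ≤ ·)).length := by simp only [Finset.length_sort]; omega
  have hmm := mir_mem hw
  have e1 : κ (mir R w) = (Equiv.swap c c1)^[idx R (mir R w)]
      (κ ((Finset.sort R (· ≤ ·))[0])) := by
    have h' := color_getElem (v₀ := v₀) hκ hne hS (idx R (mir R w))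
      (by simpa using idx_lt hmm) h0
    rwa [getElem_idx hmm] at h'
  have e2 : κ w = (Equiv.swap c c1)^[idx R w] (κ ((Finset.sort R (· ≤ ·))[0])) := by
    have h' := color_getElem (v₀ := v₀) hκ hne hS (idx R w)
      (by simpa using idx_lt hw) h0
    rwa [getElem_idx hw] at h'
  rw [e1, e2, idx_mir hw, swap_iter, swap_iter]
  have hpar : (R.card - 1 - idx R w) % 2 = (idx R w + 1) % 2 := by
    rcases heven with ⟨t, ht⟩; omega
  by_cases hev : Even (idx R w)
  · have : ¬ Even (R.card - 1 - idx R w) := by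
      rw [Nat.even_iff] at hev ⊢; omega
    simp [this, hev]
  · have : Even (R.card - 1 - idx R w) := by
      rw [Nat.even_iff] at hev ⊢; omega
    simp [this, hev, Equiv.swap_apply_self]

end Colors

end SWaux

namespace SWaux

open DyckPath Finset

variable {n N : ℕ}

section Psi

variable (D : DyckPath n) (c c1 : Fin N)

noncomputable def cset (κ : Fin n → Fin N) : Finset (Fin n) :=
  Finset.univ.filter (fun v => κ v = c ∨ κ v = c1)

noncomputable def psi (κ : Fin n → Fin N) : Fin n → Fin N := fun v =>
  if v ∈ cset c c1 κ ∧ Odd (run D (cset c c1 κ) v).card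
  then Equiv.swap c c1 (κ v) else κ v

variable {D c c1}

lemma mem_cset {κ : Fin n → Fin N} {v : Fin n} :
    v ∈ cset c c1 κ ↔ κ v = c ∨ κ v = c1 := by simp [cset]

lemma psi_apply_not_mem {κ : Fin n → Fin N} {v : Fin n} (h : v ∉ cset c c1 κ) :
    psi D c c1 κ v = κ v := if_neg (fun hh => h hh.1)

lemma psi_apply_odd {κ : Fin n → Fin N} {v : Fin n} (h1 : v ∈ cset c c1 κ)
    (h2 : Odd (run D (cset c c1 κ) v).card) :
    psi D c c1 κ v = Equiv.swap c c1 (κ v) := if_pos ⟨h1, h2⟩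

lemma psi_apply_not_odd {κ : Fin n → Fin N} {v : Fin n}
    (h2 : ¬ Odd (run D (cset c c1 κ) v).card) :
    psi D c c1 κ v = κ v := if_neg (fun hh => h2 hh.2)

lemma psi_mem_pair {κ : Fin n → Fin N} {v : Fin n} (h : v ∈ cset c c1 κ) :
    psi D c c1 κ v = c ∨ psi D c c1 κ v = c1 := by
  rcases mem_cset.1 h with h1 | h1 <;> by_cases h2 : Odd (run D (cset c c1 κ) v).card
  · rw [psi_apply_odd h h2, h1, Equiv.swap_apply_left]; exact Or.inr rfl
  · rw [psi_apply_not_odd h2, h1]; exact Or.inl rfl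
  · rw [psi_apply_odd h h2, h1, Equiv.swap_apply_right]; exact Or.inl rfl
  · rw [psi_apply_not_odd h2, h1]; exact Or.inr rfl

lemma cset_psi {κ : Fin n → Fin N} : cset c c1 (psi D c c1 κ) = cset c c1 κ := by
  ext v
  by_cases h : v ∈ cset c c1 κ
  · simp only [h, iff_true]
    exact mem_cset.2 (psi_mem_pair h)
  · simp only [h, iff_false]
    rw [mem_cset, psi_apply_not_mem h, ← mem_cset]
    exact h

lemma psi_psi {κ : Fin n → Fin N} : psi D c c1 (psi D c c1 κ) = κ := by
  funext v
  show (if v ∈ cset c c1 (psi D c c1 κ) ∧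
      Odd (run D (cset c c1 (psi D c c1 κ)) v).card
    then Equiv.swap c c1 (psi D c c1 κ v) else psi D c c1 κ v) = κ v
  rw [cset_psi]
  by_cases h : v ∈ cset c c1 κ ∧ Odd (run D (cset c c1 κ) v).card
  · rw [if_pos h, psi_apply_odd h.1 h.2, Equiv.swap_apply_self]
  · rw [if_neg h, psi]
    exact if_neg h

/-- comparison with a color outside `{c, c1}` only depends on membership in `{c, c1}`. -/
lemma lt_outside {c c1 x a b : Fin N} (hcc : c1.1 = c.1 + 1)
    (hx : x ≠ c) (hx2 : x ≠ c1) (ha : a = c ∨ a = c1) (hb : b = c ∨ b = c1) :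
    (a < x ↔ b < x) ∧ (x < a ↔ x < b) := by
  have hx' : x.1 ≠ c.1 := fun h => hx (Fin.ext h)
  have hx2' : x.1 ≠ c1.1 := fun h => hx2 (Fin.ext h)
  rcases ha with rfl | rfl <;> rcases hb with rfl | rfl <;>
    constructor <;> simp only [Fin.lt_def] <;> omega

lemma proper_psi {κ : Fin n → Fin N} (hκ : D.IsProperColoring κ) :
    D.IsProperColoring (psi D c c1 κ) := by
  have aux : ∀ u v : Fin n, u.1 < v.1 → D.Incomp (u.1 + 1) (v.1 + 1) →
      psi D c c1 κ u ≠ psi D c c1 κ v := by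
    intro u v hlt hI
    have hE : EAdj D u v := eadj_of_incomp hlt hI
    have hne := proper_ne hκ hE
    by_cases h1 : u ∈ cset c c1 κ <;> by_cases h2 : v ∈ cset c c1 κ
    · have hrel := rel_of_edge hκ rfl h1 h2 hE
      have hvr : v ∈ run D (cset c c1 κ) u := mem_run.2 ⟨h2, hrel⟩
      have hrr : run D (cset c c1 κ) v = run D (cset c c1 κ) u := run_eq_of_mem hvr
      by_cases hodd : Odd (run D (cset c c1 κ) u).card
      · rw [psi_apply_odd h1 hodd, psi_apply_odd h2 (hrr ▸ hodd)]
        exact fun hh => hne (Equiv.injective _ hh)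
      · rw [psi_apply_not_odd hodd, psi_apply_not_odd (hrr ▸ hodd)]
        exact hne
    · rw [psi_apply_not_mem h2]
      intro hh
      rcases psi_mem_pair (D := D) h1 with h | h <;>
        [exact h2 (mem_cset.2 (Or.inl (hh ▸ h))); exact h2 (mem_cset.2 (Or.inr (hh ▸ h)))]
    · rw [psi_apply_not_mem h1]
      intro hh
      rcases psi_mem_pair (D := D) h2 with h | h <;>
        [exact h1 (mem_cset.2 (Or.inl (hh ▸ h.symm ▸ rfl))); skip]
      · exact h1 (mem_cset.2 (Or.inr (by rw [hh, h])))
    · rw [psi_apply_not_mem h1, psi_apply_not_mem h2]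
      exact hne
  intro u v hI hne
  rcases lt_trichotomy u.1 v.1 with h | h | h
  · exact aux u v h hI
  · exact absurd (Fin.ext h) hne
  · exact fun hh => (aux v u h (incomp_symm D hI)) hh.symm

end Psi

end SWaux

namespace SWaux

open DyckPath Finset

variable {n N : ℕ}

section Asc

variable {D : DyckPath n} {c c1 : Fin N} {κ : Fin n → Fin N}

noncomputable def fmap (D : DyckPath n) (S : Finset (Fin n)) :
    Fin n × Fin n → Fin n × Fin n := fun p =>
  if p.1 ∈ S ∧ p.2 ∈ S ∧ rel D S p.1 p.2 ∧ Odd (run D S p.1).card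
  then (mir (run D S p.1) p.2, mir (run D S p.1) p.1) else p

lemma fmap_fmap (D : DyckPath n) (S : Finset (Fin n)) (p : Fin n × Fin n) :
    fmap D S (fmap D S p) = p := by
  by_cases h : p.1 ∈ S ∧ p.2 ∈ S ∧ rel D S p.1 p.2 ∧ Odd (run D S p.1).card
  · have hp1R : p.1 ∈ run D S p.1 := self_mem_run h.1
    have hp2R : p.2 ∈ run D S p.1 := mem_run.2 ⟨h.2.1, h.2.2.1⟩
    have haR : mir (run D S p.1) p.2 ∈ run D S p.1 := mir_mem hp2R
    have hbR : mir (run D S p.1) p.1 ∈ run D S p.1 := mir_mem hp1R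
    have hfp : fmap D S p = (mir (run D S p.1) p.2, mir (run D S p.1) p.1) := by
      rw [fmap, if_pos h]
    rw [hfp]
    have hrun : run D S (mir (run D S p.1) p.2) = run D S p.1 := run_eq_of_mem haR
    have hcond : mir (run D S p.1) p.2 ∈ S ∧ mir (run D S p.1) p.1 ∈ S ∧
        rel D S (mir (run D S p.1) p.2) (mir (run D S p.1) p.1) ∧
        Odd (run D S (mir (run D S p.1) p.2)).card := by
      refine ⟨run_subset haR, run_subset hbR, rel_of_mem_run haR hbR, ?_⟩
      rw [hrun]; exact h.2.2.2
    rw [fmap, if_pos hcond]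
    ext
    · show (mir (run D S (mir (run D S p.1) p.2)) (mir (run D S p.1) p.1)).1 = p.1.1
      rw [hrun, mir_mir hp1R]
    · show (mir (run D S (mir (run D S p.1) p.2)) (mir (run D S p.1) p.2)).1 = p.2.1
      rw [hrun, mir_mir hp2R]
  · have hfp : fmap D S p = p := by rw [fmap]; exact if_neg h
    rw [hfp, hfp]

lemma fmap_asc (hκ : D.IsProperColoring κ) (hcc : c1.1 = c.1 + 1)
    {p : Fin n × Fin n} (h1 : p.1 < p.2) (hI : D.Incomp (p.1.1 + 1) (p.2.1 + 1)) :
    (fmap D (cset c c1 κ) p).1 < (fmap D (cset c c1 κ) p).2 ∧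
    D.Incomp ((fmap D (cset c c1 κ) p).1.1 + 1) ((fmap D (cset c c1 κ) p).2.1 + 1) ∧
    (psi D c c1 κ p.1 < psi D c c1 κ p.2 ↔
      κ (fmap D (cset c c1 κ) p).1 < κ (fmap D (cset c c1 κ) p).2) := by
  have hne : c ≠ c1 := by intro h; rw [h] at hcc; omega
  have hclt : c < c1 := by rw [Fin.lt_def]; omega
  set S := cset c c1 κ with hSdef
  have hE : EAdj D p.1 p.2 := eadj_of_incomp h1 hI
  have hneq := proper_ne hκ hE
  by_cases h : p.1 ∈ S ∧ p.2 ∈ S ∧ rel D S p.1 p.2 ∧ Odd (run D S p.1).card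
  · have hp1R : p.1 ∈ run D S p.1 := self_mem_run h.1
    have hp2R : p.2 ∈ run D S p.1 := mem_run.2 ⟨h.2.1, h.2.2.1⟩
    have hfp : fmap D S p = (mir (run D S p.1) p.2, mir (run D S p.1) p.1) := by
      rw [fmap, if_pos h]
    rw [hfp]
    have hidx : idx (run D S p.1) p.2 = idx (run D S p.1) p.1 + 1 :=
      (edge_idx_succ hκ rfl h.1 h.2.1 hE).2
    have hiltp2 := idx_lt hp2R
    have hidx' : idx (run D S p.1) (mir (run D S p.1) p.1) =
        idx (run D S p.1) (mir (run D S p.1) p.2) + 1 := by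
      rw [idx_mir hp1R, idx_mir hp2R]; omega
    obtain ⟨hab, -, hEab⟩ := run_consec (mir_mem hp2R) (mir_mem hp1R) hidx'
    have hcol2 : κ (mir (run D S p.1) p.2) = κ p.2 :=
      color_mir_odd hκ hne rfl h.2.2.2 hp2R
    have hcol1 : κ (mir (run D S p.1) p.1) = κ p.1 :=
      color_mir_odd hκ hne rfl h.2.2.2 hp1R
    refine ⟨hab, hEab.incomp, ?_⟩
    have hrr : run D S p.2 = run D S p.1 := run_eq_of_mem hp2R
    rw [psi_apply_odd h.1 h.2.2.2, psi_apply_odd h.2.1 (by rw [hrr]; exact h.2.2.2),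
      hcol1, hcol2]
    rcases mem_cset.1 h.1 with ha | ha <;> rcases mem_cset.1 h.2.1 with hb | hb <;>
      rw [ha, hb] <;> simp_all [Equiv.swap_apply_left, Equiv.swap_apply_right]
  · have hfp : fmap D S p = p := by rw [fmap, if_neg h]
    rw [hfp]
    refine ⟨h1, hI, ?_⟩
    by_cases hm1 : p.1 ∈ S <;> by_cases hm2 : p.2 ∈ S
    · have hrel := rel_of_edge hκ rfl hm1 hm2 hE
      have hodd : ¬ Odd (run D S p.1).card := fun ho => h ⟨hm1, hm2, hrel, ho⟩
      have hrr : run D S p.2 = run D S p.1 := run_eq_of_mem (mem_run.2 ⟨hm2, hrel⟩)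
      rw [psi_apply_not_odd hodd, psi_apply_not_odd (by rw [hrr]; exact hodd)]
    · have hx : κ p.2 ≠ c ∧ κ p.2 ≠ c1 := by
        constructor <;> intro hh <;> exact hm2 (mem_cset.2 (by rw [hh]; simp))
      rw [psi_apply_not_mem hm2]
      exact (lt_outside hcc hx.1 hx.2 (psi_mem_pair hm1) (mem_cset.1 hm1)).1
    · have hx : κ p.1 ≠ c ∧ κ p.1 ≠ c1 := by
        constructor <;> intro hh <;> exact hm1 (mem_cset.2 (by rw [hh]; simp))
      rw [psi_apply_not_mem hm1]
      exact (lt_outside hcc hx.1 hx.2 (psi_mem_pair hm2) (mem_cset.1 hm2)).2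
    · rw [psi_apply_not_mem hm1, psi_apply_not_mem hm2]

lemma asc_psi (hκ : D.IsProperColoring κ) (hcc : c1.1 = c.1 + 1) :
    D.ascNum (psi D c c1 κ) = D.ascNum κ := by
  rw [ascNum, ascNum]
  refine Finset.card_bij' (fun p _ => fmap D (cset c c1 κ) p)
    (fun p _ => fmap D (cset c c1 κ) p) ?_ ?_ ?_ ?_
  · intro p hp
    rw [Finset.mem_filter] at hp ⊢
    obtain ⟨-, hlt, hI, hasc⟩ := hp
    obtain ⟨ha, hb, hiff⟩ := fmap_asc hκ hcc hlt hI
    exact ⟨Finset.mem_univ _, ha, hb, hiff.1 hasc⟩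
  · intro p hp
    rw [Finset.mem_filter] at hp ⊢
    obtain ⟨-, hlt, hI, hasc⟩ := hp
    obtain ⟨ha, hb, -⟩ := fmap_asc hκ hcc hlt hI
    refine ⟨Finset.mem_univ _, ha, hb, ?_⟩
    obtain ⟨-, -, hiff⟩ := fmap_asc hκ hcc ha hb
    rw [fmap_fmap] at hiff
    exact hiff.2 hasc
  · intro p _; exact fmap_fmap D _ p
  · intro p _; exact fmap_fmap D _ p

end Asc

section Prod

variable {D : DyckPath n} {c c1 : Fin N} {κ : Fin n → Fin N}

noncomputable def pmap (D : DyckPath n) (c c1 : Fin N) (κ : Fin n → Fin N) :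
    Fin n → Fin n := fun v =>
  if v ∈ cset c c1 κ ∧ Even (run D (cset c c1 κ) v).card
  then mir (run D (cset c c1 κ) v) v else v

lemma pmap_invol : Function.Involutive (pmap D c c1 κ) := by
  intro v
  by_cases h : v ∈ cset c c1 κ ∧ Even (run D (cset c c1 κ) v).card
  · have hvR : v ∈ run D (cset c c1 κ) v := self_mem_run h.1
    have hwR := mir_mem hvR
    have hrun : run D (cset c c1 κ) (mir (run D (cset c c1 κ) v) v) =
        run D (cset c c1 κ) v := run_eq_of_mem hwR
    have h1 : pmap D c c1 κ v = mir (run D (cset c c1 κ) v) v := by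
      rw [pmap, if_pos h]
    rw [h1, pmap, if_pos ⟨run_subset hwR, by rw [hrun]; exact h.2⟩, hrun, mir_mir hvR]
  · have hfp : pmap D c c1 κ v = v := by rw [pmap]; exact if_neg h
    rw [hfp, hfp]

lemma psi_pmap (hκ : D.IsProperColoring κ) (hcc : c1.1 = c.1 + 1) (v : Fin n) :
    psi D c c1 κ (pmap D c c1 κ v) = Equiv.swap c c1 (κ v) := by
  have hne : c ≠ c1 := by intro h; rw [h] at hcc; omega
  by_cases hm : v ∈ cset c c1 κ
  · by_cases ho : Odd (run D (cset c c1 κ) v).card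
    · have hp : pmap D c c1 κ v = v := by
        rw [pmap, if_neg]
        rintro ⟨-, hev⟩
        exact (Nat.not_even_iff_odd.2 ho) hev
      rw [hp, psi_apply_odd hm ho]
    · have hev := Nat.not_odd_iff_even.1 ho
      have hvR : v ∈ run D (cset c c1 κ) v := self_mem_run hm
      have hwR := mir_mem hvR
      have hrun := run_eq_of_mem hwR
      have hp : pmap D c c1 κ v = mir (run D (cset c c1 κ) v) v := by
        rw [pmap, if_pos ⟨hm, hev⟩]
      rw [hp, psi_apply_not_odd (by rw [hrun]; exact ho)]
      exact color_mir_even hκ hne rfl hev hvR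
  · have hp : pmap D c c1 κ v = v := by
      rw [pmap, if_neg (fun hh => hm hh.1)]
    have hx : κ v ≠ c ∧ κ v ≠ c1 := by
      constructor <;> intro hh <;> exact hm (mem_cset.2 (by rw [hh]; simp))
    rw [hp, psi_apply_not_mem hm, Equiv.swap_apply_of_ne_of_ne hx.1 hx.2]

lemma prod_psi (hκ : D.IsProperColoring κ) (hcc : c1.1 = c.1 + 1) :
    (∏ v : Fin n, MvPolynomial.X (R := Polynomial ℤ) (psi D c c1 κ v)) =
      ∏ v : Fin n, MvPolynomial.X (R := Polynomial ℤ) (Equiv.swap c c1 (κ v)) := by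
  have hinv := pmap_invol (D := D) (c := c) (c1 := c1) (κ := κ)
  have hcomp := Equiv.prod_comp hinv.toPerm
    (fun v => MvPolynomial.X (R := Polynomial ℤ) (psi D c c1 κ v))
  rw [← hcomp]
  refine Finset.prod_congr rfl fun v _ => ?_
  show MvPolynomial.X (psi D c c1 κ (pmap D c c1 κ v)) = _
  rw [psi_pmap hκ hcc]

end Prod

lemma rename_swap_Xq (D : DyckPath n) {N : ℕ} (c c1 : Fin N) (hcc : c1.1 = c.1 + 1) :
    MvPolynomial.rename (Equiv.swap c c1) (D.Xq N) = D.Xq N := by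
  unfold Xq
  rw [map_sum]
  have hterm : ∀ κ : Fin n → Fin N,
      MvPolynomial.rename (Equiv.swap c c1)
        (MvPolynomial.C ((Polynomial.X : Polynomial ℤ) ^ D.ascNum κ) *
          ∏ v : Fin n, MvPolynomial.X (κ v)) =
      MvPolynomial.C ((Polynomial.X : Polynomial ℤ) ^ D.ascNum κ) *
        ∏ v : Fin n, MvPolynomial.X (Equiv.swap c c1 (κ v)) := by
    intro κ
    rw [map_mul, MvPolynomial.rename_C, map_prod]
    simp only [MvPolynomial.rename_X]
  rw [Finset.sum_congr rfl fun κ _ => hterm κ]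
  refine Finset.sum_bij' (fun κ _ => psi D c c1 κ) (fun κ _ => psi D c c1 κ)
    ?_ ?_ ?_ ?_ ?_
  · intro κ hκ
    rw [Finset.mem_filter] at hκ ⊢
    exact ⟨Finset.mem_univ _, proper_psi hκ.2⟩
  · intro κ hκ
    rw [Finset.mem_filter] at hκ ⊢
    exact ⟨Finset.mem_univ _, proper_psi hκ.2⟩
  · intro κ _; exact psi_psi
  · intro κ _; exact psi_psi
  · intro κ hκ
    rw [Finset.mem_filter] at hκ
    rw [asc_psi hκ.2 hcc, prod_psi hκ.2 hcc]

end SWaux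

namespace SWaux

open DyckPath Finset

variable {n : ℕ}

lemma rename_perm_Xq (D : DyckPath n) {N : ℕ} (σ : Equiv.Perm (Fin N)) :
    MvPolynomial.rename (⇑σ) (D.Xq N) = D.Xq N := by
  cases N with
  | zero =>
    have h : (⇑σ : Fin 0 → Fin 0) = id := funext fun x => x.elim0
    rw [h, MvPolynomial.rename_id_apply]
  | succ M =>
    have hσ : σ ∈ Submonoid.closure
        (Set.range fun i : Fin M => Equiv.swap i.castSucc i.succ) := by
      rw [Equiv.Perm.mclosure_swap_castSucc_succ]; exact Submonoid.mem_top σ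
    refine Submonoid.closure_induction ?_ ?_ ?_ hσ
    · rintro x ⟨i, rfl⟩
      exact rename_swap_Xq D i.castSucc i.succ (by simp)
    · have h : (⇑(1 : Equiv.Perm (Fin (M + 1)))) = id := rfl
      rw [h, MvPolynomial.rename_id_apply]
    · intro x y _ _ hpx hpy
      have h : (⇑(x * y) : Fin (M + 1) → Fin (M + 1)) = ⇑x ∘ ⇑y := rfl
      rw [h, ← MvPolynomial.rename_rename, hpy, hpx]

end SWaux

theorem Xq_eq_of_transpose'
    (n : ℕ) (D D' : DyckPath n)
    (hdual : ∀ i j : ℕ, 1 ≤ i → i ≤ n → 1 ≤ j → j ≤ n →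
      (D'.prec i j ↔ D.prec (n + 1 - j) (n + 1 - i))) :
    ∀ N : ℕ, n ≤ N → D.Xq N = D'.Xq N := by
  intro N _
  open SWaux Finset DyckPath in
  have hdual' : ∀ u v : Fin n,
      D'.Incomp (u.1 + 1) (v.1 + 1) ↔
        D.Incomp ((Fin.rev v).1 + 1) ((Fin.rev u).1 + 1) := by
    intro u v
    have hu := u.isLt
    have hv := v.isLt
    have h1 := hdual (u.1 + 1) (v.1 + 1) (by omega) (by omega) (by omega) (by omega)
    have h2 := hdual (v.1 + 1) (u.1 + 1) (by omega) (by omega) (by omega) (by omega)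
    have eu : n + 1 - (u.1 + 1) = (Fin.rev u).1 + 1 := by rw [Fin.val_rev]; omega
    have ev : n + 1 - (v.1 + 1) = (Fin.rev v).1 + 1 := by rw [Fin.val_rev]; omega
    rw [DyckPath.Incomp, DyckPath.Incomp, h1, h2, eu, ev]
  open SWaux Finset DyckPath in
  have hproper2 : ∀ κ : Fin n → Fin N, D'.IsProperColoring κ →
      D.IsProperColoring (fun v => Fin.rev (κ (Fin.rev v))) := by
    intro κ hκ u v hI hne hh
    have hne' : Fin.rev v ≠ Fin.rev u := fun h => hne (by
      have := congrArg Fin.rev h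
      rwa [Fin.rev_rev, Fin.rev_rev, eq_comm] at this)
    have hI' : D'.Incomp ((Fin.rev v).1 + 1) ((Fin.rev u).1 + 1) := by
      have h := hdual' (Fin.rev v) (Fin.rev u)
      rw [Fin.rev_rev, Fin.rev_rev] at h
      exact h.2 hI
    exact hκ (Fin.rev v) (Fin.rev u) hI' hne' (Fin.rev_inj.mp hh).symm
  open SWaux Finset DyckPath in
  have hproper1 : ∀ κ : Fin n → Fin N, D.IsProperColoring κ →
      D'.IsProperColoring (fun v => Fin.rev (κ (Fin.rev v))) := by
    intro κ hκ u v hI hne hh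
    have hne' : Fin.rev v ≠ Fin.rev u := fun h => hne (by
      have := congrArg Fin.rev h
      rwa [Fin.rev_rev, Fin.rev_rev, eq_comm] at this)
    exact hκ (Fin.rev v) (Fin.rev u) ((hdual' u v).1 hI) hne' (Fin.rev_inj.mp hh).symm
  open SWaux Finset DyckPath in
  have hasc : ∀ κ : Fin n → Fin N,
      D'.ascNum (fun v => Fin.rev (κ (Fin.rev v))) = D.ascNum κ := by
    intro κ
    rw [DyckPath.ascNum, DyckPath.ascNum]
    refine Finset.card_bij' (fun p _ => (Fin.rev p.2, Fin.rev p.1))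
      (fun p _ => (Fin.rev p.2, Fin.rev p.1)) ?_ ?_ ?_ ?_
    · intro p hp
      rw [Finset.mem_filter] at hp ⊢
      obtain ⟨-, hlt, hI, ha⟩ := hp
      exact ⟨Finset.mem_univ _, Fin.rev_lt_rev.2 hlt, (hdual' p.1 p.2).1 hI,
        Fin.rev_lt_rev.1 ha⟩
    · intro p hp
      rw [Finset.mem_filter] at hp ⊢
      obtain ⟨-, hlt, hI, ha⟩ := hp
      refine ⟨Finset.mem_univ _, Fin.rev_lt_rev.2 hlt, ?_, ?_⟩
      · have h := hdual' (Fin.rev p.2) (Fin.rev p.1)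
        rw [Fin.rev_rev, Fin.rev_rev] at h
        exact h.2 hI
      · show Fin.rev (κ (Fin.rev (Fin.rev p.2))) < Fin.rev (κ (Fin.rev (Fin.rev p.1)))
        rw [Fin.rev_rev, Fin.rev_rev]
        exact Fin.rev_lt_rev.2 ha
    · intro p _
      ext
      · show (Fin.rev (Fin.rev p.1)).1 = p.1.1
        rw [Fin.rev_rev]
      · show (Fin.rev (Fin.rev p.2)).1 = p.2.1
        rw [Fin.rev_rev]
    · intro p _
      ext
      · show (Fin.rev (Fin.rev p.1)).1 = p.1.1
        rw [Fin.rev_rev]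
      · show (Fin.rev (Fin.rev p.2)).1 = p.2.1
        rw [Fin.rev_rev]
  open SWaux Finset DyckPath in
  have key : D'.Xq N =
      MvPolynomial.rename (⇑(Fin.revPerm : Equiv.Perm (Fin N))) (D.Xq N) := by
    unfold DyckPath.Xq
    rw [map_sum]
    refine (Finset.sum_bij' (fun κ _ => fun v => Fin.rev (κ (Fin.rev v)))
      (fun κ _ => fun v => Fin.rev (κ (Fin.rev v))) ?_ ?_ ?_ ?_ ?_)
    · intro κ hκ
      rw [Finset.mem_filter] at hκ ⊢
      exact ⟨Finset.mem_univ _, hproper2 κ hκ.2⟩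
    · intro κ hκ
      rw [Finset.mem_filter] at hκ ⊢
      exact ⟨Finset.mem_univ _, hproper1 κ hκ.2⟩
    · intro κ _
      funext v
      simp [Fin.rev_rev]
    · intro κ _
      funext v
      simp [Fin.rev_rev]
    · intro κ hκ
      rw [map_mul, MvPolynomial.rename_C, map_prod]
      simp only [MvPolynomial.rename_X]
      have e1 : D.ascNum (fun v => Fin.rev (κ (Fin.rev v))) = D'.ascNum κ := by
        have h := hasc (fun v => Fin.rev (κ (Fin.rev v)))
        have h2 : (fun v => Fin.rev ((fun w => Fin.rev (κ (Fin.rev w))) (Fin.rev v))) = κ := by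
          funext v; simp [Fin.rev_rev]
        rw [h2] at h
        exact h.symm
      rw [e1]
      congr 1
      have hcomp := Equiv.prod_comp (Fin.revPerm : Equiv.Perm (Fin n))
        (fun v => MvPolynomial.X (R := Polynomial ℤ) (κ v))
      rw [← hcomp]
      refine Finset.prod_congr rfl fun v _ => ?_
      show MvPolynomial.X (κ (Fin.rev v)) =
        MvPolynomial.X (Fin.revPerm (Fin.rev (κ (Fin.rev v))))
      rw [Fin.revPerm_apply, Fin.rev_rev]
  rw [key]
  exact (SWaux.rename_perm_Xq D Fin.revPerm).symm

/-- If the natural unit interval orders of two Dyck paths `d, d'` on an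
`n × n` board are dual under the relabelling `v ↦ n + 1 - v` (equivalently, their Young
diagrams are transposes of each other), then their chromatic quasisymmetric functions
coincide: `X_{inc(P(d))}(x₁,…,x_N; q) = X_{inc(P(d'))}(x₁,…,x_N; q)` for all `N ≥ n`. -/
theorem Xq_eq_of_transpose
    (n : ℕ) (D D' : DyckPath n)
    (hdual : ∀ i j : ℕ, 1 ≤ i → i ≤ n → 1 ≤ j → j ≤ n →
      (D'.prec i j ↔ D.prec (n + 1 - j) (n + 1 - i))) :
    ∀ N : ℕ, n ≤ N → D.Xq N = D'.Xq N := by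
  exact Xq_eq_of_transpose' n D D' hdual
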